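/- arXiv:1205.1976 — 4 statements merged into one kernel-verified Lean document; each statement's English description precedes it below -/
import Mathlib

section
/- Let f be a transcendental entire function. Suppose that for every R > 0 there exist r > 0, a₀ ∈ ℂ with |a₀| > R, an asymptotic curve Γ' with asymptotic value a₀, a simply connected domain W containing Γ', and an analytic map φ univalent on W, such that φ(Γ') is an interval (−∞, x₀) and f(z) = r·e^{φ(z)} + a₀ for all z ∈ W. Then η_f = 0, where η_f = lim_{R→∞} inf_{|f(z)|>R} |z f'(z)/f(z)|. -/
open Complex Set Metric Filter Topology Bornology
open scoped ENNReal

/-- `f` is a transcendental entire function: entire and not a polynomial. -/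
def TranscEntire (f : ℂ → ℂ) : Prop :=
  Differentiable ℂ f ∧ ¬∃ p : Polynomial ℂ, ∀ z, f z = p.eval z

/-- `a` is a critical value of `f`. -/
def IsCriticalValue (f : ℂ → ℂ) (a : ℂ) : Prop := ∃ w, deriv f w = 0 ∧ f w = a

/-- `a` is a finite asymptotic value of `f`: there is a curve `Γ : (0,1) → ℂ` tending
to `∞` along which `f` tends to `a`. -/
def IsAsymptoticValue (f : ℂ → ℂ) (a : ℂ) : Prop :=
  ∃ Γ : ℝ → ℂ, ContinuousOn Γ (Set.Ioo 0 1) ∧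
    Tendsto (fun t => ‖Γ t‖) (𝓝[<] (1:ℝ)) atTop ∧
    Tendsto (fun t => f (Γ t)) (𝓝[<] (1:ℝ)) (𝓝 a)

/-- `f` belongs to the Eremenko–Lyubich class `B`. -/
def EremenkoLyubich (f : ℂ → ℂ) : Prop :=
  TranscEntire f ∧ IsBounded {a : ℂ | IsCriticalValue f a ∨ IsAsymptoticValue f a}

/-- `η_f = lim_{R→∞} inf_{|f(z)|>R} |z f'(z)/f(z)|`, computed as a monotone limit
(supremum over `R` of the infimum over `D_R = {z : |f(z)| > R}`), valued in `[0,∞]`. -/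
noncomputable def eta (f : ℂ → ℂ) : ℝ≥0∞ :=
  ⨆ R : ℝ, ⨅ z ∈ {z : ℂ | R < ‖f z‖}, (‖z * deriv f z / f z‖₊ : ℝ≥0∞)

/-! If `η_f > 0`, then `c |f(z)| ≤ |z f'(z)|` wherever `|f(z)|` is large. Pull the ray
`(-∞, x₀)` back by the univalent `φ` to the path `p(x) = φ⁻¹(x)`. Along it `f = r eˣ + a₀` has
modulus close to `|a₀| > R` and `f' = r eˣ φ'`, so `|p'(x)| = 1 / |φ'(p(x))| ≤ (r / c) eˣ |p(x)|`.
As `eˣ` is integrable at `-∞`, a Gronwall-type argument keeps `p` bounded as `x → -∞`. But `Γ`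
runs along `p` with `x → -∞` (because `f(Γ) → a₀`) while `Γ → ∞`. -/

open Function

theorem Set.InjOn.hasStrictDerivAt_invFunOn {𝕜 : Type*} [NontriviallyNormedField 𝕜]
    [CompleteSpace 𝕜] {φ : 𝕜 → 𝕜} {s : Set 𝕜} {z φ' : 𝕜} (hinj : InjOn φ s)
    (hs : s ∈ 𝓝 z) (hφ : HasStrictDerivAt φ φ' z) (hφ' : φ' ≠ 0) :
    HasStrictDerivAt (invFunOn φ s) φ'⁻¹ (φ z) :=
  hφ.to_local_left_inverse hφ' <|
    eventually_of_mem hs fun _ hx => hinj.leftInvOn_invFunOn hx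

theorem norm_le_two_mul_norm_of_norm_deriv_le_mul_exp {E : Type*} [NormedAddCommGroup E]
    [NormedSpace ℝ E] {p p' : ℝ → E} {K a b : ℝ} (hK : 0 ≤ K) (hKb : 2 * K * Real.exp b ≤ 1)
    (hp : ∀ s ∈ Icc a b, HasDerivAt p (p' s) s)
    (hp' : ∀ s ∈ Icc a b, ‖p' s‖ ≤ K * Real.exp s * ‖p s‖) :
    ∀ s ∈ Icc a b, ‖p s‖ ≤ 2 * ‖p b‖ := by
  intro s hs
  have hpc : ContinuousOn p (Icc a b) := fun s hs => (hp s hs).continuousAt.continuousWithinAt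
  obtain ⟨y, hy, hmax⟩ :=
    isCompact_Icc.exists_isMaxOn (nonempty_Icc.2 (hs.1.trans hs.2)) hpc.norm
  set M := ‖p y‖
  have hyb : Icc y b ⊆ Icc a b := Icc_subset_Icc_left hy.1
  -- `s ↦ K M (eˢ - eʸ)` dominates the increment of `p` from its maximum point `y` onwards
  have hincr : ‖p b - p y‖ ≤ K * M * (Real.exp b - Real.exp y) := by
    refine image_norm_le_of_norm_deriv_right_le_deriv_boundary (f := fun s => p s - p y)
      (B := fun s => K * M * (Real.exp s - Real.exp y)) (B' := fun s => K * M * Real.exp s)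
      ((hpc.mono hyb).sub continuousOn_const)
      (fun s hs => ((hp s (hyb (Ico_subset_Icc_self hs))).sub_const _).hasDerivWithinAt)
      (by simp) (fun s => ((Real.hasDerivAt_exp s).sub_const _).const_mul _) (fun s hs => ?_)
      ⟨hy.2, le_rfl⟩
    have hs' := hyb (Ico_subset_Icc_self hs)
    calc ‖p' s‖ ≤ K * Real.exp s * ‖p s‖ := hp' s hs'
      _ ≤ K * Real.exp s * M := by gcongr; exact hmax hs'
      _ = K * M * Real.exp s := by ring
  have hM : M ≤ 2 * ‖p b‖ := by
    have := norm_le_norm_add_norm_sub' (p y) (p b)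
    rw [norm_sub_rev] at this
    have hMy : 0 ≤ K * M * Real.exp y := by positivity
    have hMb : M * (2 * K * Real.exp b) ≤ M := mul_le_of_le_one_right (norm_nonneg _) hKb
    linarith
  exact (hmax hs).trans hM

theorem eta_eq_zero_of_forall_exists_lt {f : ℂ → ℂ}
    (h : ∀ R c : ℝ, 0 < c → ∃ z, R < ‖f z‖ ∧ ‖z * deriv f z / f z‖ < c) : eta f = 0 := by
  refine le_antisymm (iSup_le fun R => ?_) bot_le
  refine ENNReal.le_of_forall_pos_le_add fun ε hε _ => ?_
  obtain ⟨z, hz, hzε⟩ := h R ε hε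
  refine (iInf₂_le z hz).trans ?_
  rw [zero_add, ENNReal.coe_le_coe, ← NNReal.coe_le_coe, coe_nnnorm]
  exact hzε.le

section ExpModel

variable {f φ : ℂ → ℂ} {W : Set ℂ} {r a₀ z : ℂ}

theorem deriv_eq_of_eqOn_mul_exp_add (hW : IsOpen W) (hφ : DifferentiableOn ℂ φ W)
    (hfW : ∀ z ∈ W, f z = r * exp (φ z) + a₀) (hz : z ∈ W) :
    deriv f z = r * exp (φ z) * deriv φ z := by
  have hφz := (hφ.differentiableAt (hW.mem_nhds hz)).hasDerivAt
  have hfz : f =ᶠ[𝓝 z] fun w => r * exp (φ w) + a₀ := eventually_of_mem (hW.mem_nhds hz) hfW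
  rw [hfz.deriv_eq, mul_assoc]
  exact ((hφz.cexp.const_mul r).add_const a₀).deriv

theorem norm_inv_deriv_le_of_le_norm_mul_deriv_div (hW : IsOpen W)
    (hφ : DifferentiableOn ℂ φ W) (hfW : ∀ z ∈ W, f z = r * exp (φ z) + a₀) (hz : z ∈ W)
    {c : ℝ} (hc : 0 < c) (hfz : 1 ≤ ‖f z‖) (hlow : c ≤ ‖z * deriv f z / f z‖) :
    deriv φ z ≠ 0 ∧ ‖(deriv φ z)⁻¹‖ ≤ ‖r‖ / c * ‖exp (φ z)‖ * ‖z‖ := by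
  rw [deriv_eq_of_eqOn_mul_exp_add hW hφ hfW hz, norm_div, norm_mul, norm_mul, norm_mul] at hlow
  have hlow' : c ≤ ‖z‖ * (‖r‖ * ‖exp (φ z)‖ * ‖deriv φ z‖) :=
    hlow.trans (div_le_self (by positivity) hfz)
  have hφ' : deriv φ z ≠ 0 := by
    rintro h0
    rw [h0, norm_zero, mul_zero, mul_zero] at hlow'
    linarith
  refine ⟨hφ', ?_⟩
  rw [norm_inv, inv_le_iff_one_le_mul₀ (norm_pos_iff.2 hφ'), div_mul_eq_mul_div,
    div_mul_eq_mul_div, div_mul_eq_mul_div, one_le_div hc]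
  linarith

theorem tendsto_re_atBot_of_tendsto_comp {α : Type*} {l : Filter α} {g : α → ℂ}
    (hr : r ≠ 0) (hfW : ∀ z ∈ W, f z = r * exp (φ z) + a₀) (hgW : ∀ᶠ t in l, g t ∈ W)
    (hfg : Tendsto (fun t => f (g t)) l (𝓝 a₀)) :
    Tendsto (fun t => (φ (g t)).re) l atBot := by
  rw [← tendsto_exp_nhds_zero_iff]
  have hlim := (hfg.sub_const a₀).div_const r
  rw [sub_self, zero_div] at hlim
  refine hlim.congr' (hgW.mono fun t ht => ?_)
  rw [hfW _ ht]
  field_simp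
  ring

theorem exists_forall_norm_invFunOn_ofReal_le {x₀ R c : ℝ} (hW : IsOpen W)
    (hφ : DifferentiableOn ℂ φ W) (hinj : InjOn φ W) (hray : ofReal '' Iio x₀ ⊆ φ '' W)
    (hfW : ∀ z ∈ W, f z = r * exp (φ z) + a₀) (hc : 0 < c) (ha₀ : max R 1 < ‖a₀‖)
    (hlow : ∀ z, R < ‖f z‖ → c ≤ ‖z * deriv f z / f z‖) :
    ∃ X B : ℝ, ∀ x ≤ X, ‖invFunOn φ W x‖ ≤ B := by
  set u : ℝ → ℂ := fun x => invFunOn φ W x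
  have hu : ∀ x < x₀, u x ∈ W ∧ φ (u x) = x := fun x hx =>
    ⟨invFunOn_mem (hray ⟨x, hx, rfl⟩), invFunOn_eq (hray ⟨x, hx, rfl⟩)⟩
  have hsmall : ∀ᶠ x in atBot, x < x₀ ∧ ‖r‖ * Real.exp x < ‖a₀‖ - max R 1 ∧
      2 * (‖r‖ / c) * Real.exp x ≤ 1 := by
    refine (eventually_lt_atBot x₀).and (.and ?_ ?_)
    · exact (Real.tendsto_exp_atBot.const_mul _).eventually (gt_mem_nhds (by linarith))
    · exact ((Real.tendsto_exp_atBot.const_mul _).eventually (gt_mem_nhds (by norm_num))).mono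
        fun _ => le_of_lt
  obtain ⟨X, hX⟩ := eventually_atBot.1 hsmall
  have hfu : ∀ x ≤ X, max R 1 < ‖f (u x)‖ := by
    intro x hx
    obtain ⟨hx₀, hxa, -⟩ := hX x hx
    have hsub : a₀ - f (u x) = -(r * exp x) := by
      rw [hfW _ (hu x hx₀).1, (hu x hx₀).2]; ring
    have := norm_sub_norm_le a₀ (f (u x))
    rw [hsub, norm_neg, norm_mul, ← ofReal_exp, norm_real,
      Real.norm_of_nonneg (Real.exp_pos x).le] at this
    linarith
  have hinv : ∀ x ≤ X,
      deriv φ (u x) ≠ 0 ∧ ‖(deriv φ (u x))⁻¹‖ ≤ ‖r‖ / c * Real.exp x * ‖u x‖ := by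
    intro x hx
    have hx₀ := (hX x hx).1
    have := norm_inv_deriv_le_of_le_norm_mul_deriv_div hW hφ hfW (hu x hx₀).1 hc
      (by linarith [le_max_right R 1, hfu x hx])
      (hlow _ (by linarith [le_max_left R 1, hfu x hx]))
    rwa [(hu x hx₀).2, ← ofReal_exp, norm_real, Real.norm_of_nonneg (Real.exp_pos x).le] at this
  have hderiv : ∀ x ≤ X, HasDerivAt u (deriv φ (u x))⁻¹ x := by
    intro x hx
    have hx₀ := (hX x hx).1
    have := hinj.hasStrictDerivAt_invFunOn (hW.mem_nhds (hu x hx₀).1)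
      (hφ.analyticAt (hW.mem_nhds (hu x hx₀).1)).hasStrictDerivAt (hinv x hx).1
    rw [(hu x hx₀).2] at this
    exact this.hasDerivAt.comp_ofReal
  refine ⟨X, 2 * ‖u X‖, fun x hx => ?_⟩
  exact norm_le_two_mul_norm_of_norm_deriv_le_mul_exp (by positivity) (hX X le_rfl).2.2
    (fun s hs => hderiv s hs.2) (fun s hs => (hinv s hs.2).2) x ⟨le_rfl, hx⟩

end ExpModel

theorem stmt_8_general (f : ℂ → ℂ)
    (h : ∀ R > 0, ∃ r > (0:ℝ), ∃ a₀ : ℂ, R < ‖a₀‖ ∧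
      ∃ Γ : ℝ → ℂ, ContinuousOn Γ (Set.Ioo 0 1) ∧
        Tendsto (fun t => ‖Γ t‖) (𝓝[<] (1:ℝ)) atTop ∧
        Tendsto (fun t => f (Γ t)) (𝓝[<] (1:ℝ)) (𝓝 a₀) ∧
      ∃ W : Set ℂ, IsOpen W ∧ IsConnected W ∧ SimplyConnectedSpace W ∧
        Γ '' Set.Ioo 0 1 ⊆ W ∧
      ∃ φ : ℂ → ℂ, DifferentiableOn ℂ φ W ∧ Set.InjOn φ W ∧
        ∃ x₀ : ℝ, φ '' (Γ '' Set.Ioo 0 1) = (fun x : ℝ => (x : ℂ)) '' Set.Iio x₀ ∧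
        ∀ z ∈ W, f z = r * Complex.exp (φ z) + a₀) :
    eta f = 0 := by
  refine eta_eq_zero_of_forall_exists_lt fun R c hc => ?_
  by_contra! hlow
  obtain ⟨r, hr, a₀, ha₀, Γ, -, hΓ, hfΓ, W, hW, -, -, hΓW, φ, hφ, hinj, x₀, himg, hfW⟩ :=
    h (max R 1) (lt_max_of_lt_right one_pos)
  have hray : ofReal '' Iio x₀ ⊆ φ '' W := himg ▸ image_mono hΓW
  obtain ⟨X, B, hB⟩ := exists_forall_norm_invFunOn_ofReal_le hW hφ hinj hray hfW hc ha₀ hlow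
  have hIoo : ∀ᶠ t in 𝓝[<] (1:ℝ), t ∈ Ioo 0 1 := Ioo_mem_nhdsLT zero_lt_one
  have hre := tendsto_re_atBot_of_tendsto_comp (ofReal_ne_zero.2 hr.ne') hfW
    (hIoo.mono fun t ht => hΓW ⟨t, ht, rfl⟩) hfΓ
  have hbdd : ∀ᶠ t in 𝓝[<] (1:ℝ), ‖Γ t‖ ≤ B := by
    filter_upwards [hIoo, hre.eventually_le_atBot X] with t ht htX
    obtain ⟨x, -, hx⟩ : φ (Γ t) ∈ ofReal '' Iio x₀ := himg ▸ mem_image_of_mem φ ⟨t, ht, rfl⟩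
    rw [← hinj.leftInvOn_invFunOn (hΓW ⟨t, ht, rfl⟩), ← hx]
    exact hB x (by simpa [← hx] using htX)
  obtain ⟨t, htB, hBt⟩ := (hbdd.and (hΓ.eventually_gt_atTop B)).exists
  linarith

/-- Lemma 1: if for every `R > 0` there are `r > 0`, `a₀` with `|a₀| > R`, an asymptotic
curve `Γ'` with asymptotic value `a₀`, a simply connected domain `W ⊇ Γ'`, and a map `φ`
univalent on `W` with `φ(Γ') = (−∞, x₀)` and `f = r e^φ + a₀` on `W`, then `η_f = 0`. -/
theorem stmt_8 (f : ℂ → ℂ) (hf : TranscEntire f)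
    (h : ∀ R > 0, ∃ r > (0:ℝ), ∃ a₀ : ℂ, R < ‖a₀‖ ∧
      ∃ Γ : ℝ → ℂ, ContinuousOn Γ (Set.Ioo 0 1) ∧
        Tendsto (fun t => ‖Γ t‖) (𝓝[<] (1:ℝ)) atTop ∧
        Tendsto (fun t => f (Γ t)) (𝓝[<] (1:ℝ)) (𝓝 a₀) ∧
      ∃ W : Set ℂ, IsOpen W ∧ IsConnected W ∧ SimplyConnectedSpace W ∧
        Γ '' Set.Ioo 0 1 ⊆ W ∧
      ∃ φ : ℂ → ℂ, DifferentiableOn ℂ φ W ∧ Set.InjOn φ W ∧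
        ∃ x₀ : ℝ, φ '' (Γ '' Set.Ioo 0 1) = (fun x : ℝ => (x : ℂ)) '' Set.Iio x₀ ∧
        ∀ z ∈ W, f z = r * Complex.exp (φ z) + a₀) :
    eta f = 0 :=
  stmt_8_general f h
end

section
/- Let f be a transcendental entire function with η_f ≠ 0, where η_f = lim_{R→∞} inf_{|f(z)|>R} |z f'(z)/f(z)|. Then the set of finite asymptotic values of f arising from direct logarithmic singularities of f⁻¹ is bounded; that is, there exists R > 0 such that f has no direct logarithmic singularity over any a₀ ∈ ℂ with |a₀| > R. -/
/-!
Choose `ε, R > 0` with `ε |f z| ≤ |z f'(z)|` whenever `|f z| > R`. A direct singularity over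
`a₀` with `|a₀| > R + 1` gives a component `U` of `f⁻¹(B(a₀, r))` on which `f` omits `a₀`, and
points `z' ∈ U` with `f z'` arbitrarily close to `a₀`. On the part of `U` over `B(a₀, 1)` we have
`|f'(z)| ≥ εR / |z|`, so the segment from `f z'` to `a₀` lifts through `f` into `U` by continuous
induction: the inverse function theorem extends a lift, the derivative bound keeps it inside
a fixed disc, and compactness together with `U` being a component closes it up. The endpoint of
the lift is a preimage of `a₀` in `U`, a contradiction. Logarithmic singularities are direct.
-/

open Complex Set Metric Filter Topology Bornology
open scoped ENNReal

/-- The ball `B(a,r)` on the Riemann sphere, intersected with `ℂ`: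
`B(a,r)` for finite `a`, and `{z : |z| > r}` for `a = ∞`. -/
def sphBall (a : OnePoint ℂ) (r : ℝ) : Set ℂ :=
  Option.rec {z : ℂ | r < ‖z‖} (fun w => Metric.ball w r) a

/-- The punctured ball `B(a,r) \ {a}` on the Riemann sphere, intersected with `ℂ`. -/
def punctBall (a : OnePoint ℂ) (r : ℝ) : Set ℂ :=
  Option.rec {z : ℂ | r < ‖z‖} (fun w => Metric.ball w r \ {w}) a

/-- A transcendental singularity of `f⁻¹` over `a`: a nested choice `r ↦ U(r)` of
connected components of `f⁻¹(B(a,r))` with empty intersection. -/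
structure TranscSing (f : ℂ → ℂ) (a : OnePoint ℂ) where
  U : ℝ → Set ℂ
  isComp : ∀ r, 0 < r →
    ∃ z ∈ f ⁻¹' sphBall a r, U r = connectedComponentIn (f ⁻¹' sphBall a r) z
  nested : ∀ r₁ r₂, 0 < r₁ → r₁ ≤ r₂ → U r₁ ⊆ U r₂
  inter_empty : ⋂ r ∈ Set.Ioi (0:ℝ), U r = ∅

/-- The singularity is direct: for some `r > 0`, `f` omits the value `a` on `U(r)`. -/
def TranscSing.IsDirect {f : ℂ → ℂ} {a : OnePoint ℂ} (s : TranscSing f a) : Prop :=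
  ∃ r > 0, ∀ z ∈ s.U r, (f z : OnePoint ℂ) ≠ a

/-- The singularity is indirect if it is not direct. -/
def TranscSing.IsIndirect {f : ℂ → ℂ} {a : OnePoint ℂ} (s : TranscSing f a) : Prop :=
  ¬ s.IsDirect

/-- The singularity is logarithmic: for some `r > 0` the restriction
`f : U(r) → B(a,r) \ {a}` is a universal covering. -/
def TranscSing.IsLogarithmic {f : ℂ → ℂ} {a : OnePoint ℂ} (s : TranscSing f a) : Prop :=
  ∃ r > 0, ∃ hm : Set.MapsTo f (s.U r) (punctBall a r),
    SimplyConnectedSpace (s.U r) ∧ IsCoveringMap hm.restrict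

/-- `a` is a limit of critical values of `f` (on the Riemann sphere). -/
def IsLimitOfCritVals (f : ℂ → ℂ) (a : OnePoint ℂ) : Prop :=
  ∃ c : ℕ → ℂ, (∀ n, IsCriticalValue f (c n)) ∧
    Tendsto (fun n => (c n : OnePoint ℂ)) atTop (𝓝 a)

theorem exists_pos_mul_norm_le_norm_mul_deriv_of_eta_ne_zero {f : ℂ → ℂ} (h : eta f ≠ 0) :
    ∃ ε > 0, ∃ R > 0, ∀ z, R < ‖f z‖ → ε * ‖f z‖ ≤ ‖z‖ * ‖deriv f z‖ := by
  obtain ⟨R, hR⟩ : ∃ R : ℝ, (⨅ z ∈ {z : ℂ | R < ‖f z‖}, (‖z * deriv f z / f z‖₊ : ℝ≥0∞)) ≠ 0 := by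
    by_contra! hR
    exact h (ENNReal.iSup_eq_zero.2 hR)
  obtain ⟨ε, hε, hεR⟩ := ENNReal.lt_iff_exists_nnreal_btwn.1 (pos_iff_ne_zero.2 hR)
  refine ⟨ε, by exact_mod_cast hε, max R 1, by positivity, fun z hz => ?_⟩
  have hfz : 0 < ‖f z‖ := one_pos.trans_le (le_max_right R 1) |>.trans hz
  have hzR : z ∈ {z : ℂ | R < ‖f z‖} := (le_max_left R 1).trans_lt hz
  have hle : (ε : ℝ≥0∞) ≤ ‖z * deriv f z / f z‖₊ := hεR.le.trans (iInf₂_le z hzR)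
  have : (ε : ℝ) ≤ ‖z‖ * ‖deriv f z‖ / ‖f z‖ := by
    rw [← norm_mul, ← norm_div]
    exact_mod_cast hle
  rw [le_div_iff₀ hfz] at this
  linarith

theorem IsOpen.closure_connectedComponentIn_inter_subset {X : Type*} [TopologicalSpace X]
    [LocallyConnectedSpace X] {F : Set X} (hF : IsOpen F) (x : X) :
    closure (connectedComponentIn F x) ∩ F ⊆ connectedComponentIn F x := by
  rintro y ⟨hy, hyF⟩
  obtain ⟨w, hwy, hwx⟩ := mem_closure_iff.1 hy _ hF.connectedComponentIn
    (mem_connectedComponentIn hyF)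
  rw [connectedComponentIn_eq hwx, ← connectedComponentIn_eq hwy]
  exact mem_connectedComponentIn hyF

theorem HasStrictDerivAt.eventually_exists_norm_mul_norm_sub_le {𝕜 : Type*}
    [NontriviallyNormedField 𝕜] [CompleteSpace 𝕜] {f : 𝕜 → 𝕜} {c z : 𝕜}
    (hf : HasStrictDerivAt f c z) (hc : c ≠ 0) {U : Set 𝕜} (hU : U ∈ 𝓝 z) :
    ∀ᶠ q in 𝓝 (f z), ∃ y ∈ U, f y = q ∧ ‖c‖ * ‖y - z‖ ≤ 2 * ‖q - f z‖ := by
  set σ := hf.localInverse f c z hc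
  have hσ : HasDerivAt σ c⁻¹ (f z) := (hf.to_localInverse hc).hasDerivAt
  have hσz : σ (f z) = z := (hf.hasStrictFDerivAt_equiv hc).localInverse_apply_image
  have hσU : ∀ᶠ q in 𝓝 (f z), σ q ∈ U := by
    rw [← hσz] at hU
    exact hσ.continuousAt.preimage_mem_nhds hU
  have hlin := (hasDerivAt_iff_isLittleO.1 hσ).def (norm_pos_iff.2 (inv_ne_zero hc))
  filter_upwards [hf.eventually_right_inverse hc, hσU, hlin] with q hq hqU hql
  refine ⟨σ q, hqU, hq, ?_⟩
  rw [hσz] at hql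
  have : ‖σ q - z‖ ≤ 2 * ‖c⁻¹‖ * ‖q - f z‖ := by
    calc ‖σ q - z‖ ≤ ‖(q - f z) • c⁻¹‖ + ‖σ q - z - (q - f z) • c⁻¹‖ := norm_le_insert' _ _
      _ ≤ 2 * ‖c⁻¹‖ * ‖q - f z‖ := by rw [norm_smul]; linarith
  rw [norm_inv] at this
  calc ‖c‖ * ‖σ q - z‖ ≤ ‖c‖ * (2 * ‖c‖⁻¹ * ‖q - f z‖) := by gcongr
    _ = 2 * ‖q - f z‖ := by field_simp

section SegmentLift

open AffineMap

variable {f : ℂ → ℂ} {U : Set ℂ} {a b : ℂ} {K Z : ℝ}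

/-- The times `t` at which the point `lineMap b a t` of the segment `[b, a]` has a preimage in `U`
of modulus at most `Z * (1 + t)`; the growth bound is what makes the set closed. -/
def liftTimes (f : ℂ → ℂ) (U : Set ℂ) (b a : ℂ) (Z : ℝ) : Set ℝ :=
  {t | ∃ z ∈ U, f z = lineMap b a t ∧ ‖z‖ ≤ Z * (1 + t)}

theorem isClosed_liftTimes_inter_Icc (hf : Continuous f)
    (hU : closure U ∩ f ⁻¹' segment ℝ b a ⊆ U) : IsClosed (liftTimes f U b a Z ∩ Icc 0 1) := by
  set C : Set (ℝ × ℂ) := {p | p.1 ∈ Icc 0 1 ∧ p.2 ∈ closure U ∧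
    f p.2 = lineMap b a p.1 ∧ ‖p.2‖ ≤ Z * (1 + p.1)}
  have hC : IsCompact C := by
    refine ((isCompact_Icc (a := (0 : ℝ)) (b := 1)).prod
      (isCompact_closedBall (0 : ℂ) (2 * Z))).of_isClosed_subset ?_ ?_
    · refine (isClosed_Icc.preimage continuous_fst).inter <|
        (isClosed_closure.preimage continuous_snd).inter <|
        (isClosed_eq (hf.comp continuous_snd) ?_).inter
        (isClosed_le (continuous_norm.comp continuous_snd)
          (continuous_const.mul (continuous_const.add continuous_fst)))
      exact (lineMap_continuous (R := ℝ) (p := b) (q := a)).comp continuous_fst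
    · rintro ⟨t, z⟩ ⟨ht, -, -, hz⟩
      dsimp only at ht hz
      refine ⟨ht, ?_⟩
      rw [mem_closedBall_zero_iff]
      nlinarith [ht.1, ht.2, norm_nonneg z]
  convert (hC.image continuous_fst).isClosed using 1
  ext t
  constructor
  · rintro ⟨⟨z, hzU, hfz, hz⟩, ht⟩
    exact ⟨(t, z), ⟨ht, subset_closure hzU, hfz, hz⟩, rfl⟩
  · rintro ⟨⟨t, z⟩, ⟨ht, hzU, hfz, hz⟩, rfl⟩
    have hseg : f z ∈ segment ℝ b a := by
      rw [show f z = _ from hfz]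
      exact lineMap_mem_segment ℝ b a ht
    exact ⟨⟨z, hU ⟨hzU, hseg⟩, hfz, hz⟩, ht⟩

theorem liftTimes_mem_nhdsGT (hf : Differentiable ℂ f) (hU : IsOpen U) (hK : 0 < K)
    (hKU : ∀ z ∈ U, f z ∈ segment ℝ b a → K ≤ ‖z‖ * ‖deriv f z‖) (hab : 4 * ‖a - b‖ ≤ K)
    {m : ℝ} (hm : m ∈ liftTimes f U b a Z ∩ Ico 0 1) : liftTimes f U b a Z ∈ 𝓝[>] m := by
  obtain ⟨⟨zm, hzmU, hfzm, hzm⟩, hm0, hm1⟩ := hm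
  set c := deriv f zm
  have hKc : K ≤ ‖zm‖ * ‖c‖ := hKU zm hzmU (hfzm ▸ lineMap_mem_segment ℝ b a ⟨hm0, hm1.le⟩)
  have hc : c ≠ 0 := by
    intro hc
    rw [hc, norm_zero, mul_zero] at hKc
    linarith
  have hlocal := (hf.analyticAt zm).hasStrictDerivAt.eventually_exists_norm_mul_norm_sub_le hc
    (hU.mem_nhds hzmU)
  have hw : Tendsto (lineMap b a) (𝓝 m) (𝓝 (f zm)) := hfzm ▸ lineMap_continuous.tendsto m
  filter_upwards [nhdsWithin_le_nhds (hw.eventually hlocal), self_mem_nhdsWithin]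
    with t ⟨z, hzU, hfz, hz⟩ (hmt : m < t)
  refine ⟨z, hzU, hfz, ?_⟩
  rw [hfzm, ← dist_eq_norm (lineMap b a t), dist_lineMap_lineMap, Real.dist_eq,
    abs_of_pos (sub_pos.2 hmt), dist_comm, dist_eq_norm] at hz
  -- `|f'(zm)| ≥ K / |zm|`, so the new lift point moves by at most `(t - m) |zm| / 2`.
  have hZ : 0 ≤ Z := by nlinarith [norm_nonneg zm]
  have hmove : K * ‖z - zm‖ ≤ K * (‖zm‖ * (t - m) / 2) := by
    calc K * ‖z - zm‖ ≤ ‖zm‖ * (‖c‖ * ‖z - zm‖) := by nlinarith [norm_nonneg (z - zm)]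
      _ ≤ ‖zm‖ * (2 * ((t - m) * ‖a - b‖)) := by gcongr
      _ ≤ K * (‖zm‖ * (t - m) / 2) := by
        nlinarith [mul_le_mul_of_nonneg_left hab
          (mul_nonneg (norm_nonneg zm) (sub_nonneg.2 hmt.le))]
  have hmove' := le_of_mul_le_mul_left hmove hK
  calc ‖z‖ ≤ ‖zm‖ + ‖z - zm‖ := norm_le_insert' z zm
    _ ≤ Z * (1 + m) * (1 + (t - m) / 2) := by nlinarith [sub_nonneg.2 hmt.le]
    _ ≤ Z * (1 + t) := by nlinarith [mul_nonneg hZ (sub_nonneg.2 hmt.le)]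

theorem mem_image_of_le_norm_mul_deriv (hf : Differentiable ℂ f) (hU : IsOpen U)
    (hUc : closure U ∩ f ⁻¹' segment ℝ b a ⊆ U) (hK : 0 < K)
    (hKU : ∀ z ∈ U, f z ∈ segment ℝ b a → K ≤ ‖z‖ * ‖deriv f z‖) (hab : 4 * ‖a - b‖ ≤ K)
    {z₀ : ℂ} (hz₀ : z₀ ∈ U) (hfz₀ : f z₀ = b) : a ∈ f '' U := by
  have h0 : (0 : ℝ) ∈ liftTimes f U b a ‖z₀‖ := ⟨z₀, hz₀, by simp [hfz₀], by simp⟩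
  have hIcc : Icc 0 1 ⊆ liftTimes f U b a ‖z₀‖ :=
    (isClosed_liftTimes_inter_Icc hf.continuous hUc).Icc_subset_of_forall_mem_nhdsWithin h0
      fun _ hm => liftTimes_mem_nhdsGT hf hU hK hKU hab hm
  obtain ⟨z, hzU, hfz, -⟩ := hIcc ⟨zero_le_one, le_rfl⟩
  exact ⟨z, hzU, by simpa using hfz⟩

end SegmentLift

theorem TranscSing.IsLogarithmic.isDirect {f : ℂ → ℂ} {a : ℂ} {s : TranscSing f a}
    (hs : s.IsLogarithmic) : s.IsDirect := by
  obtain ⟨r, hr, hmaps, -⟩ := hs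
  exact ⟨r, hr, fun z hz => by simpa using (hmaps hz).2⟩

theorem exists_forall_not_isDirect_of_eta_ne_zero {f : ℂ → ℂ} (hf : Differentiable ℂ f)
    (h : eta f ≠ 0) :
    ∃ R > 0, ∀ a₀ : ℂ, R < ‖a₀‖ → ∀ s : TranscSing f (a₀ : OnePoint ℂ), ¬ s.IsDirect := by
  obtain ⟨ε, hε, R, hR, hfR⟩ := exists_pos_mul_norm_le_norm_mul_deriv_of_eta_ne_zero h
  refine ⟨R + 1, by linarith, fun a₀ ha s ⟨r, hr, homit⟩ => ?_⟩
  set r' := min r (min 1 (ε * R / 4))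
  have hr' : 0 < r' := lt_min hr (lt_min one_pos (by positivity))
  obtain ⟨z₀, -, hU⟩ := s.isComp r hr
  obtain ⟨z', hz', hU'⟩ := s.isComp r' hr'
  change f z' ∈ ball a₀ r' at hz'
  have hz'U : z' ∈ s.U r :=
    s.nested r' r hr' (min_le_left _ _) (hU' ▸ mem_connectedComponentIn hz')
  have hseg : segment ℝ (f z') a₀ ⊆ ball a₀ r' :=
    (convex_ball a₀ r').segment_subset hz' (mem_ball_self hr')
  have hUc : closure (s.U r) ∩ f ⁻¹' segment ℝ (f z') a₀ ⊆ s.U r := by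
    rw [hU]
    refine (subset_inter inter_subset_left ?_).trans
      ((isOpen_ball.preimage hf.continuous).closure_connectedComponentIn_inter_subset z₀)
    exact inter_subset_right.trans
      (preimage_mono (hseg.trans (ball_subset_ball (min_le_left _ _))))
  have hKU : ∀ z ∈ s.U r, f z ∈ segment ℝ (f z') a₀ → ε * R ≤ ‖z‖ * ‖deriv f z‖ := by
    intro z _ hz
    have hfz : R < ‖f z‖ := by
      have := mem_ball.1 (ball_subset_ball (min_le_of_right_le (min_le_left _ _)) (hseg hz))
      rw [dist_comm, dist_eq_norm] at this
      linarith [norm_sub_norm_le a₀ (f z)]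
    calc ε * R ≤ ε * ‖f z‖ := by gcongr
      _ ≤ ‖z‖ * ‖deriv f z‖ := hfR z hfz
  have hab : 4 * ‖a₀ - f z'‖ ≤ ε * R := by
    have := (mem_ball.1 hz').le.trans (min_le_of_right_le (min_le_right _ _))
    rw [dist_comm, dist_eq_norm] at this
    linarith
  have hUo : IsOpen (s.U r) := hU ▸ (isOpen_ball.preimage hf.continuous).connectedComponentIn
  obtain ⟨z, hzU, hfz⟩ := mem_image_of_le_norm_mul_deriv hf hUo hUc
    (by positivity) hKU hab hz'U rfl
  exact homit z hzU (congrArg _ hfz)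

/-- If `η_f ≠ 0` then the projections of direct logarithmic singularities over finite
points are bounded. -/
theorem stmt_9 (f : ℂ → ℂ) (hf : TranscEntire f) (h : eta f ≠ 0) :
    ∃ R > 0, ∀ a₀ : ℂ, R < ‖a₀‖ →
      ∀ s : TranscSing f (a₀ : OnePoint ℂ), ¬ s.IsLogarithmic := by
  obtain ⟨R, hR, hdirect⟩ := exists_forall_not_isDirect_of_eta_ne_zero hf.1 h
  exact ⟨R, hR, fun a₀ ha s hs => hdirect a₀ ha s hs.isDirect⟩
end

section
/- Let f be a transcendental entire function with η_f ≠ 0. Then the set of projections of indirect transcendental singularities of f⁻¹ over finite points is bounded; that is, there exists R > 0 such that f has no indirect singularity over any a ∈ ℂ with |a| > R. -/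
open Complex Set Metric Filter Topology Bornology
open scoped ENNReal

/-!
Since `η_f > 0`, there are `c, R > 0` with `c ‖f z‖ ≤ ‖z‖ ‖f' z‖` wherever `‖f z‖ > R`. Fix
`‖a‖ > R` and `D = B(a, ‖a‖ - R)`. Over `D` the map `f` has no critical points, and a lift `u` of a
segment `s ↦ a + s (w - a)` in `D` satisfies `‖u'‖ ≤ ‖w - a‖ ‖u‖ / (c R)`; by Grönwall such lifts
stay bounded, so every segment issuing from `a` lifts through `f` from any `a`-point. Given two
`a`-points `z₁, z₂` joined by a path `δ` in a component of `f⁻¹(D)`, lift from `z₁` the segments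
from `a` to `f (δ t)`: the family of lifts is continuous in `t`, its endpoints trace `δ` by
uniqueness of lifts, and the segments at `t = 0, 1` are constant, so `z₂ = z₁`. Hence each `U(r)`
contains at most one `a`-point, while an indirect singularity would put an `a`-point in every
`U(r)` and thus in `⋂ U(r) = ∅`.
-/

section Lifting

variable {E X : Type*} [TopologicalSpace E] {p : E → X}

def HasLiftOn (p : E → X) (γ : ℝ → X) (e₀ : E) (T : ℝ) : Prop :=
  ∃ Γ : ℝ → E, ContinuousOn Γ (Icc 0 T) ∧ Γ 0 = e₀ ∧ EqOn (p ∘ Γ) γ (Icc 0 T)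

theorem hasLiftOn_zero {γ : ℝ → X} {e₀ : E} (he₀ : p e₀ = γ 0) : HasLiftOn p γ e₀ 0 :=
  ⟨fun _ ↦ e₀, continuousOn_const, rfl, by
    rintro t ⟨h0, h1⟩
    rw [le_antisymm h1 h0]
    exact he₀⟩

theorem HasLiftOn.mono {γ : ℝ → X} {e₀ : E} {T T' : ℝ} (h : HasLiftOn p γ e₀ T) (hT' : T' ≤ T) :
    HasLiftOn p γ e₀ T' :=
  let ⟨Γ, hc, h0, hl⟩ := h
  ⟨Γ, hc.mono (Icc_subset_Icc_right hT'), h0, hl.mono (Icc_subset_Icc_right hT')⟩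

theorem HasLiftOn.of_openPartialHomeomorph [TopologicalSpace X] {γ : ℝ → X} (hγ : Continuous γ)
    {e₀ : E} {φ : OpenPartialHomeomorph E X} (hφ : p = φ) {Γ : ℝ → E} {t T : ℝ}
    (hΓ : ContinuousOn Γ (Icc 0 t)) (hΓ0 : Γ 0 = e₀) (hΓγ : EqOn (p ∘ Γ) γ (Icc 0 t))
    (ht : 0 ≤ t) (htT : t ≤ T) (hsource : Γ t ∈ φ.source)
    (htarget : MapsTo γ (Icc t T) φ.target) :
    HasLiftOn p γ e₀ T := by
  subst hφ
  have hjoin : φ.symm (γ t) = Γ t := by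
    rw [← hΓγ ⟨ht, le_rfl⟩]
    exact φ.left_inv hsource
  refine ⟨fun s ↦ if s ≤ t then Γ s else φ.symm (γ s), ?_, by simp [ht, hΓ0], ?_⟩
  · rw [← Icc_union_Icc_eq_Icc ht htT]
    refine ContinuousOn.union_of_isClosed ?_ ?_ isClosed_Icc isClosed_Icc
    · exact hΓ.congr fun s hs ↦ if_pos hs.2
    · refine (φ.continuousOn_symm.comp hγ.continuousOn htarget).congr fun s hs ↦ ?_
      rcases hs.1.eq_or_lt with rfl | hlt
      · simp [hjoin]
      · simp [not_le.2 hlt]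
  · intro s hs
    by_cases hst : s ≤ t
    · simpa [hst] using hΓγ ⟨hs.1, hst⟩
    · simpa [hst] using φ.right_inv (htarget ⟨(not_le.1 hst).le, hs.2⟩)

theorem IsLocalHomeomorph.exists_gt_hasLiftOn_of_mem_closure [TopologicalSpace X] [T2Space X]
    (hp : IsLocalHomeomorph p) {γ : ℝ → X} (hγ : Continuous γ) {e₀ : E} {K : Set E}
    (hK : IsCompact K)
    (hbound : ∀ T ∈ Icc (0 : ℝ) 1, ∀ Γ : ℝ → E, ContinuousOn Γ (Icc 0 T) → Γ 0 = e₀ →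
      EqOn (p ∘ Γ) γ (Icc 0 T) → Γ T ∈ K)
    {T₀ : ℝ} (hT₀ : T₀ ∈ closure {T ∈ Icc (0 : ℝ) 1 | HasLiftOn p γ e₀ T}) :
    ∃ T > T₀, HasLiftOn p γ e₀ T := by
  set A := {T ∈ Icc (0 : ℝ) 1 | HasLiftOn p γ e₀ T}
  have := mem_closure_iff_nhdsWithin_neBot.1 hT₀
  have : Nonempty E := ⟨e₀⟩
  choose! Γ hΓ using fun T (hT : T ∈ A) ↦ hT.2
  -- the endpoints `Γ T T` of the lifts accumulate at some `e ∈ K` lying over `γ T₀`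
  obtain ⟨e, -, he⟩ := hK.exists_clusterPt (f := map (fun T ↦ Γ T T) (𝓝[A] T₀)) <|
    le_principal_iff.2 <| eventually_nhdsWithin_of_forall fun T hT ↦
      hbound T hT.1 (Γ T) (hΓ T hT).1 (hΓ T hT).2.1 (hΓ T hT).2.2
  have hpe : p e = γ T₀ := by
    refine eq_of_nhds_neBot (he.map hp.continuous.continuousAt ?_)
    refine ((hγ.tendsto T₀).mono_left nhdsWithin_le_nhds).congr' ?_
    filter_upwards [self_mem_nhdsWithin] with T hT
    exact ((hΓ T hT).2.2 ⟨hT.1.1, le_rfl⟩).symm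
  obtain ⟨φ, heφ, rfl⟩ := hp e
  obtain ⟨ε, hε, hγε⟩ := Metric.eventually_nhds_iff.1 <| hγ.continuousAt.preimage_mem_nhds <|
    φ.open_target.mem_nhds (hpe ▸ φ.map_source heφ)
  obtain ⟨T, hTsource, hTA, hTε⟩ :=
    ((frequently_map.1 (he.frequently (φ.open_source.mem_nhds heφ))).and_eventually
      (inter_mem self_mem_nhdsWithin
        (nhdsWithin_le_nhds (Metric.ball_mem_nhds T₀ (half_pos hε))))).exists
  rw [Metric.mem_ball, Real.dist_eq, abs_lt] at hTε
  refine ⟨T₀ + ε / 2, by linarith, ?_⟩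
  refine HasLiftOn.of_openPartialHomeomorph hγ rfl (hΓ T hTA).1 (hΓ T hTA).2.1 (hΓ T hTA).2.2
    hTA.1.1 (by linarith) hTsource fun s hs ↦ hγε ?_
  rw [Real.dist_eq, abs_lt]
  constructor <;> linarith [hs.1, hs.2]

theorem IsLocalHomeomorph.hasLiftOn_one_of_isCompact [TopologicalSpace X] [T2Space X]
    (hp : IsLocalHomeomorph p) {γ : ℝ → X} (hγ : Continuous γ) {e₀ : E} (he₀ : p e₀ = γ 0)
    {K : Set E} (hK : IsCompact K)
    (hbound : ∀ T ∈ Icc (0 : ℝ) 1, ∀ Γ : ℝ → E, ContinuousOn Γ (Icc 0 T) → Γ 0 = e₀ →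
      EqOn (p ∘ Γ) γ (Icc 0 T) → Γ T ∈ K) :
    HasLiftOn p γ e₀ 1 := by
  set A := {T ∈ Icc (0 : ℝ) 1 | HasLiftOn p γ e₀ T}
  have h0A : (0 : ℝ) ∈ A := ⟨left_mem_Icc.2 zero_le_one, hasLiftOn_zero he₀⟩
  have hAbdd : BddAbove A := ⟨1, fun T hT ↦ hT.1.2⟩
  obtain ⟨T, hT, hlift⟩ :=
    hp.exists_gt_hasLiftOn_of_mem_closure hγ hK hbound (csSup_mem_closure ⟨0, h0A⟩ hAbdd)
  by_contra h1
  have hTA : T ∈ A :=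
    ⟨⟨(le_csSup hAbdd h0A).trans hT.le, (not_le.1 fun h ↦ h1 (hlift.mono h)).le⟩, hlift⟩
  exact (le_csSup hAbdd hTA).not_gt hT

end Lifting

theorem IsLocalHomeomorphOn.isLocalHomeomorph_restrict {X Y : Type*} [TopologicalSpace X]
    [TopologicalSpace Y] {f : X → Y} {s : Set X} (hf : IsLocalHomeomorphOn f s) (hs : IsOpen s) :
    IsLocalHomeomorph (f ∘ ((↑) : s → X)) := by
  rw [isLocalHomeomorph_iff_isLocalHomeomorphOn_univ]
  exact hf.comp hs.isOpenEmbedding_subtypeVal.isLocalHomeomorph.isLocalHomeomorphOn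
    fun z _ ↦ z.2

theorem isLocalHomeomorphOn_setOf_deriv_ne_zero {f : ℂ → ℂ} (hf : Differentiable ℂ f) :
    IsLocalHomeomorphOn f {z | deriv f z ≠ 0} :=
  IsLocalHomeomorphOn.mk f _ fun z hz ↦
    let hs := ((hf.analyticAt z).hasStrictDerivAt).hasStrictFDerivAt_equiv hz
    ⟨hs.toOpenPartialHomeomorph f, hs.mem_toOpenPartialHomeomorph_source,
      by rw [hs.toOpenPartialHomeomorph_coe]; exact eqOn_refl _ _⟩

theorem deriv_ne_zero_of_le_norm_mul {f : ℂ → ℂ} {d : ℝ} (hd : 0 < d) {z : ℂ}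
    (h : d ≤ ‖z‖ * ‖deriv f z‖) : deriv f z ≠ 0 := fun h0 ↦ by
  rw [h0, norm_zero, mul_zero] at h
  exact hd.not_ge h

theorem isLocalHomeomorph_subtype_deriv_ne_zero {f : ℂ → ℂ} (hf : Differentiable ℂ f) :
    IsLocalHomeomorph (fun z : {z // deriv f z ≠ 0} ↦ f z) :=
  (isLocalHomeomorphOn_setOf_deriv_ne_zero hf).isLocalHomeomorph_restrict
    (isOpen_ne_fun ((hf.contDiff (n := 1)).continuous_deriv le_rfl) continuous_const)

theorem HasStrictDerivAt.hasDerivWithinAt_of_eqOn_comp {f : ℂ → ℂ} {f' γ' : ℂ} {u γ : ℝ → ℂ}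
    {s : Set ℝ} {t : ℝ} (hf : HasStrictDerivAt f f' (u t)) (hf' : f' ≠ 0)
    (hu : ContinuousWithinAt u s t) (hγ : HasDerivWithinAt γ γ' s t) (hfu : EqOn (f ∘ u) γ s)
    (ht : t ∈ s) : HasDerivWithinAt u (γ' / f') s t := by
  have hg := hf.to_localInverse hf'
  rw [show f (u t) = γ t from hfu ht] at hg
  refine ((hg.hasDerivAt.comp_hasDerivWithinAt t hγ).congr_of_eventuallyEq ?_ ?_).congr_deriv
    (inv_mul_eq_div _ _)
  · filter_upwards [hu.eventually (hf.eventually_left_inverse hf'), self_mem_nhdsWithin]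
      with x hx hxs
    rw [Function.comp_apply, ← hfu hxs]
    exact hx.symm
  · rw [Function.comp_apply, ← hfu ht]
    exact ((hf.eventually_left_inverse hf').self_of_nhds).symm

theorem norm_le_mul_exp_of_eqOn_comp {f : ℂ → ℂ} (hf : Differentiable ℂ f) {d M : ℝ}
    (hd : 0 < d) {Q : Set ℂ} (hQ : ∀ z, f z ∈ Q → d ≤ ‖z‖ * ‖deriv f z‖) {γ γ' : ℝ → ℂ}
    (hγ : ∀ t, HasDerivAt γ (γ' t) t) (hγ' : ∀ t, ‖γ' t‖ ≤ M) {u : ℝ → ℂ} {T : ℝ}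
    (hu : ContinuousOn u (Icc 0 T)) (hfu : EqOn (f ∘ u) γ (Icc 0 T))
    (hγQ : MapsTo γ (Icc 0 T) Q) :
    ∀ t ∈ Icc 0 T, ‖u t‖ ≤ ‖u 0‖ * Real.exp (M / d * t) := by
  have hQu : ∀ t ∈ Icc 0 T, d ≤ ‖u t‖ * ‖deriv f (u t)‖ := fun t ht ↦
    hQ _ (show (f ∘ u) t ∈ Q from (hfu ht).symm ▸ hγQ ht)
  have hderiv_ne : ∀ t ∈ Icc 0 T, deriv f (u t) ≠ 0 := fun t ht ↦
    deriv_ne_zero_of_le_norm_mul hd (hQu t ht)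
  intro t ht
  simpa [gronwallBound_ε0] using norm_le_gronwallBound_of_norm_deriv_right_le (ε := 0) hu
    (fun x hx ↦ ((hf.analyticAt (u x)).hasStrictDerivAt.hasDerivWithinAt_of_eqOn_comp
      (hderiv_ne x (Ico_subset_Icc_self hx)) (hu x (Ico_subset_Icc_self hx))
      (hγ x).hasDerivWithinAt hfu (Ico_subset_Icc_self hx)).mono_of_mem_nhdsWithin
        (Icc_mem_nhdsGE_of_mem hx))
    le_rfl (fun x hx ↦ by
      have hx' := Ico_subset_Icc_self hx
      have hpos : 0 < ‖deriv f (u x)‖ := norm_pos_iff.2 (hderiv_ne x hx')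
      rw [norm_div, div_le_iff₀ hpos, add_zero, div_mul_eq_mul_div, div_mul_eq_mul_div,
        le_div_iff₀ hd]
      have := hQu x hx'
      have := hγ' x
      nlinarith [norm_nonneg (γ' x)]) t ht

theorem hasLiftOn_one_of_norm_mul_deriv_ge {f : ℂ → ℂ} (hf : Differentiable ℂ f) {d M : ℝ}
    (hd : 0 < d) {Q : Set ℂ} (hQ : ∀ z, f z ∈ Q → d ≤ ‖z‖ * ‖deriv f z‖) {γ γ' : ℝ → ℂ}
    (hγ : ∀ t, HasDerivAt γ (γ' t) t) (hγ' : ∀ t, ‖γ' t‖ ≤ M) (hγQ : MapsTo γ (Icc 0 1) Q)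
    (z₀ : {z // deriv f z ≠ 0}) (hz₀ : f z₀ = γ 0) :
    HasLiftOn (fun z : {z // deriv f z ≠ 0} ↦ f z) γ z₀ 1 := by
  have hγc : Continuous γ := continuous_iff_continuousAt.2 fun t ↦ (hγ t).continuousAt
  set B := ‖(z₀ : ℂ)‖ * Real.exp (M / d)
  have hK : IsCompact (((↑) : {z // deriv f z ≠ 0} → ℂ) ⁻¹'
      (closedBall 0 B ∩ f ⁻¹' (γ '' Icc 0 1))) := by
    refine IsInducing.subtypeVal.isCompact_preimage' ((isCompact_closedBall 0 B).inter_right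
      ((isCompact_Icc.image hγc).isClosed.preimage hf.continuous)) ?_
    rintro z ⟨-, t, ht, htz⟩
    exact ⟨⟨z, deriv_ne_zero_of_le_norm_mul hd (hQ z (htz ▸ hγQ ht))⟩, rfl⟩
  have hM : 0 ≤ M := (norm_nonneg _).trans (hγ' 0)
  refine (isLocalHomeomorph_subtype_deriv_ne_zero hf).hasLiftOn_one_of_isCompact hγc hz₀ hK
    fun T hT Γ hΓ hΓ0 hΓγ ↦ ⟨?_, ?_⟩
  · have := norm_le_mul_exp_of_eqOn_comp hf hd hQ hγ hγ'
      (continuous_subtype_val.comp_continuousOn hΓ) hΓγ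
      (hγQ.mono_left (Icc_subset_Icc_right hT.2)) T ⟨hT.1, le_rfl⟩
    rw [mem_closedBall, dist_zero_right]
    refine this.trans ?_
    simp only [Function.comp_apply, hΓ0]
    refine mul_le_mul_of_nonneg_left (Real.exp_le_exp.2 ?_) (norm_nonneg _)
    exact mul_le_of_le_one_right (div_nonneg hM hd.le) hT.2
  · exact ⟨T, hT, (hΓγ ⟨hT.1, le_rfl⟩).symm⟩

theorem hasLiftOn_segment {f : ℂ → ℂ} (hf : Differentiable ℂ f) {a : ℂ} {r d : ℝ} (hd : 0 < d)
    (hQ : ∀ z, f z ∈ ball a r → d ≤ ‖z‖ * ‖deriv f z‖) {w : ℂ} (hw : w ∈ ball a r)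
    (z₀ : {z // deriv f z ≠ 0}) (hz₀ : f z₀ = a) :
    HasLiftOn (fun z : {z // deriv f z ≠ 0} ↦ f z) (fun s : ℝ ↦ a + s * (w - a)) z₀ 1 := by
  refine hasLiftOn_one_of_norm_mul_deriv_ge hf hd hQ (γ' := fun _ ↦ w - a) (fun s ↦ ?_)
    (fun _ ↦ le_rfl) (fun s hs ↦ ?_) z₀ (by simpa using hz₀)
  · simpa using ((hasDerivAt_id (s : ℝ)).ofReal_comp.mul_const (w - a)).const_add a
  · rw [mem_ball, dist_eq_norm, add_sub_cancel_left, norm_mul, Complex.norm_real,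
      Real.norm_of_nonneg hs.1]
    exact (mul_le_of_le_one_left (norm_nonneg _) hs.2).trans_lt (mem_ball_iff_norm.1 hw)

open unitInterval in
theorem Path.target_eq_source_of_apply_mem_ball {f : ℂ → ℂ} (hf : Differentiable ℂ f)
    {a : ℂ} {r d : ℝ} (hd : 0 < d) (hQ : ∀ z, f z ∈ ball a r → d ≤ ‖z‖ * ‖deriv f z‖)
    {z₁ z₂ : ℂ} (h₁ : f z₁ = a) (h₂ : f z₂ = a) (δ : Path z₁ z₂)
    (hδQ : ∀ t, f (δ t) ∈ ball a r) : z₂ = z₁ := by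
  set p : {z // deriv f z ≠ 0} → ℂ := fun z ↦ f z
  have hreg : ∀ z, f z ∈ ball a r → deriv f z ≠ 0 := fun z hz ↦
    deriv_ne_zero_of_le_norm_mul hd (hQ z hz)
  have hp : IsLocalHomeomorph p := isLocalHomeomorph_subtype_deriv_ne_zero hf
  have hsep : IsSeparatedMap p := T2Space.isSeparatedMap p
  set z₀ : {z // deriv f z ≠ 0} := ⟨z₁, hreg z₁ (δ.source ▸ hδQ 0)⟩
  choose Λ hΛc hΛ0 hΛ using fun t : I ↦ hasLiftOn_segment hf hd hQ (hδQ t) z₀ h₁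
  have hΛconst : ∀ t, f (δ t) = a → Λ t 1 = z₀ := fun t ht ↦ by
    have hfΛ : ∀ s : I, f (Λ t s) = a := fun s ↦ by simpa [ht] using hΛ t s.2
    simpa [hΛ0] using hsep.const_of_comp hp.isLocallyInjective
      ((hΛc t).comp_continuous continuous_subtype_val fun s ↦ s.2)
      (fun s s' ↦ (hfΛ s).trans (hfΛ s').symm) 1 0
  set F : C(I × I, ℂ) :=
    ⟨fun st ↦ a + (st.1 : ℂ) * (f (δ st.2) - a), by have := hf.continuous; fun_prop⟩
  have hg := hp.continuous_lift hsep F (g := fun st ↦ Λ st.2 st.1)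
    (funext fun st ↦ hΛ st.2 st.1.2)
    (by simpa only [Set.Icc.coe_zero, hΛ0] using continuous_const)
    (fun t ↦ (hΛc t).comp_continuous continuous_subtype_val fun s ↦ s.2)
  have hlift := hsep.eq_of_comp_eq hp.isLocallyInjective (hg.comp (.prodMk_right 1))
    (g₂ := fun t ↦ (⟨δ t, hreg _ (hδQ t)⟩ : {z // deriv f z ≠ 0})) (by fun_prop) ?_ 0 ?_
  · have h1 := congrArg Subtype.val (congrFun hlift 1)
    simp only [Function.comp_apply, Set.Icc.coe_one, hΛconst 1 (by rwa [δ.target]), z₀,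
      δ.target] at h1
    exact h1.symm
  · funext t
    simpa using hΛ t (right_mem_Icc.2 zero_le_one)
  · exact Subtype.ext (by simp [hΛconst 0 (by rwa [δ.source]), z₀])

theorem eq_of_mem_connectedComponentIn_preimage_ball {f : ℂ → ℂ} (hf : Differentiable ℂ f)
    {a : ℂ} {r d : ℝ} (hd : 0 < d) (hQ : ∀ z, f z ∈ ball a r → d ≤ ‖z‖ * ‖deriv f z‖)
    {z₁ z₂ : ℂ} (h₁ : f z₁ = a) (h₂ : f z₂ = a)
    (hz : z₂ ∈ connectedComponentIn (f ⁻¹' ball a r) z₁) : z₂ = z₁ := by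
  have hz₁ : z₁ ∈ f ⁻¹' ball a r := by
    by_contra h
    rwa [connectedComponentIn_eq_empty h] at hz
  obtain ⟨δ, hδ⟩ :=
    ((isOpen_ball.preimage hf.continuous).connectedComponentIn.isConnected_iff_isPathConnected.1
      (isConnected_connectedComponentIn_iff.2 hz₁)).joinedIn z₁ (mem_connectedComponentIn hz₁) z₂ hz
  exact δ.target_eq_source_of_apply_mem_ball hf hd hQ h₁ h₂ fun t ↦
    connectedComponentIn_subset (f ⁻¹' ball a r) z₁ (hδ t)

theorem exists_mul_norm_le_of_eta_ne_zero {f : ℂ → ℂ} (h : eta f ≠ 0) :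
    ∃ c > 0, ∃ R > 0, ∀ z, R < ‖f z‖ → c * ‖f z‖ ≤ ‖z‖ * ‖deriv f z‖ := by
  obtain ⟨R, hR⟩ :
      ∃ R : ℝ, (⨅ z ∈ {z : ℂ | R < ‖f z‖}, (‖z * deriv f z / f z‖₊ : ℝ≥0∞)) ≠ 0 := by
    by_contra! hR
    exact h (ENNReal.iSup_eq_zero.2 hR)
  obtain ⟨c, hc0, hc⟩ := ENNReal.lt_iff_exists_nnreal_btwn.1 (pos_iff_ne_zero.2 hR)
  refine ⟨c, by exact_mod_cast hc0, max R 1, by positivity, fun z hz ↦ ?_⟩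
  have hcz : (c : ℝ) ≤ ‖z * deriv f z / f z‖ := by
    have := hc.le.trans (biInf_le _ (lt_of_le_of_lt (le_max_left R 1) hz))
    exact_mod_cast this
  have hfz : 0 < ‖f z‖ := lt_of_le_of_lt (zero_le_one.trans (le_max_right R 1)) hz
  rwa [norm_div, norm_mul, le_div_iff₀ hfz] at hcz

theorem TranscSing.not_isIndirect_of_subsingleton {f : ℂ → ℂ} {a : ℂ}
    (s : TranscSing f (a : OnePoint ℂ)) {r : ℝ} (hr : 0 < r)
    (h : {z ∈ s.U r | f z = a}.Subsingleton) : ¬ s.IsIndirect := by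
  intro hind
  have hpts : ∀ ρ > 0, ∃ z ∈ s.U ρ, f z = a := fun ρ hρ ↦ by
    by_contra! H
    exact hind ⟨ρ, hρ, fun z hz ↦ by simpa using H z hz⟩
  obtain ⟨z₀, hz₀, hz₀a⟩ := hpts r hr
  have hmem : z₀ ∈ ⋂ ρ ∈ Ioi (0 : ℝ), s.U ρ := mem_iInter₂.2 fun ρ hρ ↦ by
    obtain ⟨z, hz, hza⟩ := hpts (min ρ r) (lt_min hρ hr)
    have hzz₀ := h ⟨s.nested _ _ (lt_min hρ hr) (min_le_right _ _) hz, hza⟩ ⟨hz₀, hz₀a⟩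
    exact s.nested _ _ (lt_min hρ hr) (min_le_left _ _) (hzz₀ ▸ hz)
  rwa [s.inter_empty] at hmem

/-- If `η_f ≠ 0` then the projections of indirect singularities over finite points are
bounded. -/
theorem stmt_10 (f : ℂ → ℂ) (hf : TranscEntire f) (h : eta f ≠ 0) :
    ∃ R > 0, ∀ a : ℂ, R < ‖a‖ →
      ∀ s : TranscSing f (a : OnePoint ℂ), ¬ s.IsIndirect := by
  obtain ⟨c, hc, R, hR, hbound⟩ := exists_mul_norm_le_of_eta_ne_zero h
  refine ⟨R, hR, fun a ha s ↦ s.not_isIndirect_of_subsingleton (sub_pos.2 ha) ?_⟩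
  have hQ : ∀ z, f z ∈ ball a (‖a‖ - R) → c * R ≤ ‖z‖ * ‖deriv f z‖ := fun z hz ↦ by
    have hRz : R < ‖f z‖ := by
      rw [mem_ball, dist_comm, dist_eq_norm] at hz
      linarith [norm_sub_norm_le a (f z)]
    exact (mul_le_mul_of_nonneg_left hRz.le hc.le).trans (hbound z hRz)
  obtain ⟨z, -, hU⟩ := s.isComp _ (sub_pos.2 ha)
  rintro z₁ ⟨hz₁, hz₁a⟩ z₂ ⟨hz₂, hz₂a⟩
  rw [hU] at hz₁ hz₂
  rw [connectedComponentIn_eq hz₂] at hz₁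
  exact eq_of_mem_connectedComponentIn_preimage_ball hf.1 (mul_pos hc hR) hQ hz₂a hz₁a hz₁
end

section
/- The entire function f(z) = e^z · sin(e^z) has an unbounded set of critical values. -/
open Complex Set Metric Filter Topology Bornology
open scoped ENNReal

/-!
Write `f = g ∘ exp` with `g w = w sin w`. Since `exp` maps onto `ℂ \ {0}` and `(g ∘ exp)' = (g' ∘ exp) · exp`,
every critical value of `g` at a nonzero point is one of `f`. On the real axis
`g' u = sin u + u cos u` changes sign on each `[2πn, 2πn + π]`, and at a zero `u` of `g'` we have
`(u sin u)² = u² - sin² u ≥ u² - 1`, so these critical values are unbounded.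
-/

namespace Real

theorem exists_ge_sin_add_mul_cos_eq_zero (C : ℝ) :
    ∃ u, C ≤ u ∧ Real.sin u + u * Real.cos u = 0 := by
  obtain ⟨n, hn⟩ := exists_nat_ge C
  set a : ℝ := n * (2 * π)
  have hCa : C ≤ a := by nlinarith [pi_gt_three, n.cast_nonneg (α := ℝ)]
  have hsin : Real.sin a = 0 := (sin_periodic.nat_mul_eq n).trans sin_zero
  have hcos : Real.cos a = 1 := cos_nat_mul_two_pi n
  have hzero : (0 : ℝ) ∈ Icc (Real.sin (a + π) + (a + π) * Real.cos (a + π))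
      (Real.sin a + a * Real.cos a) := by
    rw [sin_add_pi, cos_add_pi, hsin, hcos]
    constructor <;> nlinarith [pi_pos]
  obtain ⟨u, hu, hgu⟩ := intermediate_value_Icc' (by linarith [pi_pos])
    (by fun_prop : ContinuousOn (fun u => Real.sin u + u * Real.cos u) (Icc a (a + π))) hzero
  exact ⟨u, hCa.trans hu.1, hgu⟩

theorem sq_sub_one_le_sq_mul_sin {u : ℝ} (h : Real.sin u + u * Real.cos u = 0) :
    u ^ 2 - 1 ≤ (u * Real.sin u) ^ 2 := by
  have hsq : (u * Real.sin u) ^ 2 = u ^ 2 - Real.sin u ^ 2 := by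
    linear_combination u ^ 2 * sin_sq_add_cos_sq u + (Real.sin u - u * Real.cos u) * h
  linarith [sin_sq_le_one u]

end Real

theorem hasDerivAt_mul_sin (w : ℂ) :
    HasDerivAt (fun w => w * Complex.sin w) (Complex.sin w + w * Complex.cos w) w := by
  simpa using (hasDerivAt_id' w).fun_mul (Complex.hasDerivAt_sin w)

theorem isCriticalValue_comp_exp {g : ℂ → ℂ} {w : ℂ} (hg : DifferentiableAt ℂ g w)
    (hw : w ≠ 0) (hcrit : deriv g w = 0) : IsCriticalValue (fun z => g (exp z)) (g w) := by
  refine ⟨log w, ?_, by simp only [exp_log hw]⟩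
  rw [← exp_log hw] at hg hcrit
  exact (hg.hasDerivAt.comp (log w) (hasDerivAt_exp (log w))).deriv.trans (by rw [hcrit, zero_mul])

/-- The function `f(z) = e^z sin(e^z)` has an unbounded set of critical values. -/
theorem stmt_14 :
    ¬ IsBounded {a : ℂ | IsCriticalValue (fun z => Complex.exp z * Complex.sin (Complex.exp z)) a} := by
  rw [isBounded_iff_forall_norm_le]
  push Not
  intro C
  obtain ⟨u, hCu, hu⟩ := Real.exists_ge_sin_add_mul_cos_eq_zero (|C| + 2)
  have hu0 : (u : ℂ) ≠ 0 := ofReal_ne_zero.mpr (by linarith [abs_nonneg C])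
  have hcrit : IsCriticalValue (fun z => exp z * sin (exp z)) (u * sin u) :=
    isCriticalValue_comp_exp (hasDerivAt_mul_sin u).differentiableAt hu0
      (by rw [(hasDerivAt_mul_sin u).deriv]; exact_mod_cast hu)
  refine ⟨_, hcrit, ?_⟩
  have hlt : |C| < |u * Real.sin u| :=
    sq_lt_sq.mp (by nlinarith [Real.sq_sub_one_le_sq_mul_sin hu, abs_nonneg C, sq_abs C])
  rw [← ofReal_sin, ← ofReal_mul, norm_real, Real.norm_eq_abs]
  exact (le_abs_self C).trans_lt hlt
end
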